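/- Let α be a finite nonempty type and E = EuclideanSpace ℝ (Fin P). Let p : E → α → ℝ and θ₀ ∈ E be such that on a neighborhood U of θ₀ we have p θ y > 0 for all y and ∑_{y∈α} p θ y = 1, and for each y the map θ ↦ p θ y is twice continuously differentiable on U. Define φ(θ') = ∑_{y} p θ₀ y * Real.log (p θ₀ y / p θ' y). Then the second Fréchet derivative of φ at θ₀ equals the Fisher bilinear form: for all u, v ∈ E, D²φ(θ₀)(u, v) = ∑_{y} p θ₀ y * (L_y u) * (L_y v), where L_y = fderiv ℝ (fun θ => Real.log (p θ y)) θ₀. -/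

import Mathlib

/-! Near `θ₀` the divergence is `∑ y, p θ₀ y * log (p θ₀ y) - ∑ y, p θ₀ y * log (p θ y)`, and
`D²(log g) = D²g / g - D(log g) ⊗ D(log g)`. Weighted by `p θ₀ y`, the first term contributes
`-∑ y, D²(p · y)`, which vanishes because `∑ y, p θ y = 1` near `θ₀`; the second term is the
Fisher form. -/

open Filter Topology

section

variable {𝕜 E F ι : Type*} [NontriviallyNormedField 𝕜] [NormedAddCommGroup E] [NormedSpace 𝕜 E]
  [NormedAddCommGroup F] [NormedSpace 𝕜 F]

theorem sum_iteratedFDeriv_eq_zero_of_sum_eventuallyEq_const {f : ι → E → F} {s : Finset ι}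
    {x : E} {n : ℕ} {c : F} (hn : n ≠ 0) (hf : ∀ i ∈ s, ContDiffAt 𝕜 n (f i) x)
    (hsum : (fun t => ∑ i ∈ s, f i t) =ᶠ[𝓝 x] fun _ => c) :
    ∑ i ∈ s, iteratedFDeriv 𝕜 n (f i) x = 0 := by
  rw [← iteratedFDeriv_fun_sum_apply hf, (hsum.iteratedFDeriv (𝕜 := 𝕜) n).eq_of_nhds,
    iteratedFDeriv_const_of_ne hn, Pi.zero_apply]

end

section

variable {E : Type*} [NormedAddCommGroup E] [NormedSpace ℝ E] {g : E → ℝ} {x : E}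

theorem fderiv_log_eventuallyEq (hg : ContDiffAt ℝ 2 g x) (hx : g x ≠ 0) :
    fderiv ℝ (fun t => Real.log (g t)) =ᶠ[𝓝 x] fun t => (g t)⁻¹ • fderiv ℝ g t := by
  filter_upwards [hg.eventually (by simp), hg.continuousAt.eventually_ne hx] with t hgt hgt₀
  exact ((hgt.differentiableAt (by norm_num)).hasFDerivAt.log hgt₀).fderiv

theorem iteratedFDeriv_two_log_apply (hg : ContDiffAt ℝ 2 g x) (hx : g x ≠ 0) (u v : E) :
    iteratedFDeriv ℝ 2 (fun t => Real.log (g t)) x ![u, v] =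
      iteratedFDeriv ℝ 2 g x ![u, v] / g x - fderiv ℝ g x u * fderiv ℝ g x v / g x ^ 2 := by
  have hDg : HasFDerivAt (fderiv ℝ g) (fderiv ℝ (fderiv ℝ g) x) x :=
    ((hg.fderiv_right (m := 1) (by norm_num)).differentiableAt one_ne_zero).hasFDerivAt
  have hinv : HasFDerivAt (fun t => (g t)⁻¹) ((-(g x ^ 2)⁻¹) • fderiv ℝ g x) x :=
    (hasDerivAt_inv hx).comp_hasFDerivAt x (hg.differentiableAt (by norm_num)).hasFDerivAt
  rw [iteratedFDeriv_two_apply, iteratedFDeriv_two_apply,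
    (fderiv_log_eventuallyEq hg hx).fderiv_eq, (hinv.fun_smul hDg).fderiv]
  simp only [neg_smul, Matrix.cons_val_zero, Matrix.cons_val_one, Matrix.cons_val_fin_one,
    add_apply, smul_apply, neg_apply, ContinuousLinearMap.smulRight_apply, smul_eq_mul]
  field_simp
  ring

theorem iteratedFDeriv_two_mul_log_div_apply (hg : ContDiffAt ℝ 2 g x) (hx : g x ≠ 0) (u v : E) :
    iteratedFDeriv ℝ 2 (fun t => g x * Real.log (g x / g t)) x ![u, v] =
      g x * fderiv ℝ (fun t => Real.log (g t)) x u * fderiv ℝ (fun t => Real.log (g t)) x v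
        - iteratedFDeriv ℝ 2 g x ![u, v] := by
  have hlog : ContDiffAt ℝ 2 (fun t => Real.log (g t)) x := hg.log hx
  have hsplit : (fun t => g x * Real.log (g x / g t)) =ᶠ[𝓝 x]
      fun t => g x * Real.log (g x) + (-g x) • Real.log (g t) := by
    filter_upwards [hg.continuousAt.eventually_ne hx] with t ht
    rw [Real.log_div hx ht, smul_eq_mul]
    ring
  rw [(hsplit.iteratedFDeriv (𝕜 := ℝ) 2).eq_of_nhds,
    fun_iteratedFDeriv_add_apply contDiffAt_const (hlog.const_smul _),
    iteratedFDeriv_const_of_ne two_ne_zero, iteratedFDeriv_const_smul_apply' hlog]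
  simp only [Pi.zero_apply, zero_add, smul_apply, smul_eq_mul,
    iteratedFDeriv_two_log_apply hg hx, (fderiv_log_eventuallyEq hg hx).eq_of_nhds]
  field_simp
  ring

end

theorem kl_second_derivative_eq_fisher_general
    {α : Type*} [Fintype α] {P : ℕ}
    (p : EuclideanSpace ℝ (Fin P) → α → ℝ) (θ₀ : EuclideanSpace ℝ (Fin P))
    (U : Set (EuclideanSpace ℝ (Fin P))) (hU : U ∈ nhds θ₀)
    (hpos : ∀ θ ∈ U, ∀ y, 0 < p θ y)
    (hsum : ∀ θ ∈ U, ∑ y, p θ y = 1)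
    (hsmooth : ∀ y, ContDiffOn ℝ 2 (fun θ => p θ y) U) :
    ∀ u v : EuclideanSpace ℝ (Fin P),
      iteratedFDeriv ℝ 2
          (fun θ' => ∑ y, p θ₀ y * Real.log (p θ₀ y / p θ' y)) θ₀ ![u, v]
        = ∑ y, p θ₀ y * ((fderiv ℝ (fun θ => Real.log (p θ y)) θ₀) u)
            * ((fderiv ℝ (fun θ => Real.log (p θ y)) θ₀) v) := by
  intro u v
  have hp : ∀ y, ContDiffAt ℝ 2 (fun θ => p θ y) θ₀ := fun y => (hsmooth y).contDiffAt hU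
  have hp₀ : ∀ y, p θ₀ y ≠ 0 := fun y => (hpos θ₀ (mem_of_mem_nhds hU) y).ne'
  have hD2sum : ∑ y, iteratedFDeriv ℝ 2 (fun θ => p θ y) θ₀ = 0 :=
    sum_iteratedFDeriv_eq_zero_of_sum_eventuallyEq_const two_ne_zero (fun y _ => hp y)
      (eventually_of_mem hU hsum)
  have hterm : ∀ y, ContDiffAt ℝ 2 (fun θ' => p θ₀ y * Real.log (p θ₀ y / p θ' y)) θ₀ :=
    fun y => contDiffAt_const.mul
      ((contDiffAt_const.div (hp y) (hp₀ y)).log (div_ne_zero (hp₀ y) (hp₀ y)))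
  rw [iteratedFDeriv_fun_sum_apply fun y _ => hterm y, sum_apply,
    Finset.sum_congr rfl fun y _ => iteratedFDeriv_two_mul_log_div_apply (hp y) (hp₀ y) u v,
    Finset.sum_sub_distrib, ← sum_apply, hD2sum, zero_apply, sub_zero]

/-- The second Fréchet derivative of the KL divergence
`φ θ' = D_KL(p θ₀ ‖ p θ')` at `θ₀` equals the Fisher bilinear form. -/
theorem kl_second_derivative_eq_fisher
    {α : Type*} [Fintype α] [Nonempty α] {P : ℕ}
    (p : EuclideanSpace ℝ (Fin P) → α → ℝ) (θ₀ : EuclideanSpace ℝ (Fin P))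
    (U : Set (EuclideanSpace ℝ (Fin P))) (hU : U ∈ nhds θ₀)
    (hpos : ∀ θ ∈ U, ∀ y, 0 < p θ y)
    (hsum : ∀ θ ∈ U, ∑ y, p θ y = 1)
    (hsmooth : ∀ y, ContDiffOn ℝ 2 (fun θ => p θ y) U) :
    ∀ u v : EuclideanSpace ℝ (Fin P),
      iteratedFDeriv ℝ 2
          (fun θ' => ∑ y, p θ₀ y * Real.log (p θ₀ y / p θ' y)) θ₀ ![u, v]
        = ∑ y, p θ₀ y * ((fderiv ℝ (fun θ => Real.log (p θ y)) θ₀) u)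
            * ((fderiv ℝ (fun θ => Real.log (p θ y)) θ₀) v) :=
  kl_second_derivative_eq_fisher_general p θ₀ U hU hpos hsum hsmooth
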